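/- Let {X_n} be i.i.d. random variables and ρ₁ = sup{r ≥ 0 : lim_{x→∞} x^r P(X > x) = 0}. Then limsup_{n→∞} (log max_{1≤k≤n} X_k)/(log n) = 1/ρ₁ almost surely, with the conventions 1/0 = ∞ and 1/∞ = 0. -/

import Mathlib

/-!
If `x ^ r * P(X > x) → 0` and `a * r > 1`, then `∑ P(X_n > (n+1)^a) < ∞`, so by the first
Borel–Cantelli lemma `X_n ≤ (n+1)^a` eventually; hence `max_{k<n} X_k ≤ n^a` eventually and the
limsup is at most `a`. If `x ^ r * P(X > x) ↛ 0` and `a * r < 1`, then along the points `x` where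
`x ^ r * P(X > x) ≥ ε` the partial sum of `P(X_n > (n+1)^a)` over `n < ⌊x^(1/a)⌋` is at least
`⌊x^(1/a)⌋ * P(X > x) ≳ ε x^(1/a - r) → ∞`, so by the second Borel–Cantelli lemma (independence)
`X_n > (n+1)^a` infinitely often and the limsup is at least `a`. Letting `a` run through the
rationals on either side of `1/ρ₁` gives the equality almost surely.
-/

open MeasureTheory ProbabilityTheory Filter
open scoped ENNReal

/-- `log x = ln (e ∨ x)` as in the paper. -/
noncomputable def Log (x : ℝ) : ℝ := Real.log (max (Real.exp 1) x)

/-- `pmax X n ω = max_{1 ≤ k ≤ n} X_k(ω)` (indexed `0,…,n-1`), junk value at `n = 0`. -/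
noncomputable def pmax {Ω : Type*} (X : ℕ → Ω → ℝ) (n : ℕ) (ω : Ω) : ℝ :=
  if h : n = 0 then X 0 ω
  else (Finset.range n).sup' (Finset.nonempty_range_iff.mpr h) fun k => X k ω

open Real Finset

lemma Log_eq_log {x : ℝ} (hx : exp 1 ≤ x) : Log x = log x := by
  rw [Log, max_eq_right hx]

lemma Log_pos (x : ℝ) : 0 < Log x :=
  log_pos (lt_max_of_lt_left (one_lt_exp_iff.2 one_pos))

lemma log_le_Log {x : ℝ} (hx : 0 < x) : log x ≤ Log x :=
  log_le_log hx (le_max_right _ _)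

lemma Log_le_log {x y : ℝ} (hy : exp 1 ≤ y) (hxy : x ≤ y) : Log x ≤ log y :=
  log_le_log ((exp_pos 1).trans_le (le_max_left _ _)) (max_le hy hxy)

section pmax

variable {Ω : Type*} (X : ℕ → Ω → ℝ)

lemma le_pmax {k n : ℕ} (h : k < n) (ω : Ω) : X k ω ≤ pmax X n ω := by
  rw [pmax, dif_neg (by omega)]
  exact le_sup' (fun k => X k ω) (mem_range.2 h)

lemma pmax_le {n : ℕ} (hn : n ≠ 0) (ω : Ω) {c : ℝ} (h : ∀ k < n, X k ω ≤ c) :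
    pmax X n ω ≤ c := by
  rw [pmax, dif_neg hn]
  exact sup'_le _ _ fun k hk => h k (mem_range.1 hk)

end pmax

noncomputable def limsupLogMax {Ω : Type*} (X : ℕ → Ω → ℝ) (ω : Ω) : ℝ≥0∞ :=
  limsup (fun n : ℕ => ENNReal.ofReal (Log (pmax X n ω) / Log n)) atTop

section Deterministic

variable {Ω : Type*} {X : ℕ → Ω → ℝ} {ω : Ω} {a : ℝ}

lemma eventually_pmax_le_rpow (ha : 0 < a)
    (h : ∀ᶠ n : ℕ in atTop, X n ω ≤ ((n : ℝ) + 1) ^ a) :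
    ∀ᶠ n : ℕ in atTop, pmax X n ω ≤ (n : ℝ) ^ a := by
  obtain ⟨N, hN⟩ := eventually_atTop.1 h
  have hC : ∀ᶠ n : ℕ in atTop, pmax X N ω ≤ (n : ℝ) ^ a :=
    ((tendsto_rpow_atTop ha).comp tendsto_natCast_atTop_atTop).eventually_ge_atTop _
  filter_upwards [hC, eventually_gt_atTop 0] with n hCn hn
  refine pmax_le X hn.ne' ω fun k hk => ?_
  rcases lt_or_ge k N with hkN | hkN
  · exact (le_pmax X hkN ω).trans hCn
  · calc X k ω ≤ ((k : ℝ) + 1) ^ a := hN k hkN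
      _ ≤ (n : ℝ) ^ a := rpow_le_rpow (by positivity) (by exact_mod_cast hk) ha.le

lemma limsupLogMax_le_of_eventually_pmax_le (ha : 0 < a)
    (h : ∀ᶠ n : ℕ in atTop, pmax X n ω ≤ (n : ℝ) ^ a) :
    limsupLogMax X ω ≤ ENNReal.ofReal a := by
  have hn := tendsto_natCast_atTop_atTop (R := ℝ)
  refine limsup_le_of_le (by isBoundedDefault) ?_
  filter_upwards [h, hn.eventually_ge_atTop (exp 1),
    ((tendsto_rpow_atTop ha).comp hn).eventually_ge_atTop (exp 1)] with n hmax hn1 hna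
  refine ENNReal.ofReal_le_ofReal ((div_le_iff₀ (Log_pos _)).2 ?_)
  calc Log (pmax X n ω) ≤ log ((n : ℝ) ^ a) := Log_le_log hna hmax
    _ = a * Log n := by rw [log_rpow ((exp_pos 1).trans_le hn1), Log_eq_log hn1]

lemma ofReal_le_limsupLogMax (h : ∃ᶠ n : ℕ in atTop, ((n : ℝ) + 1) ^ a < X n ω) :
    ENNReal.ofReal a ≤ limsupLogMax X ω := by
  have hm : ∃ᶠ m : ℕ in atTop, (m : ℝ) ^ a < pmax X m ω :=
    (tendsto_add_atTop_nat 1).frequently <| h.mono fun n hn => by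
      push_cast
      exact hn.trans_le (le_pmax X n.lt_succ_self ω)
  refine le_limsup_of_frequently_le ?_ (by isBoundedDefault)
  refine (hm.and_eventually (tendsto_natCast_atTop_atTop.eventually_ge_atTop (exp 1))).mono
    fun m ⟨hlt, hm1⟩ => ENNReal.ofReal_le_ofReal ((le_div_iff₀ (Log_pos _)).2 ?_)
  have hpow : 0 < (m : ℝ) ^ a := rpow_pos_of_pos ((exp_pos 1).trans_le hm1) a
  calc a * Log m = log ((m : ℝ) ^ a) := by
        rw [Log_eq_log hm1, log_rpow ((exp_pos 1).trans_le hm1)]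
    _ ≤ log (pmax X m ω) := log_le_log hpow hlt.le
    _ ≤ Log (pmax X m ω) := log_le_Log (hpow.trans hlt)

end Deterministic

section Tail

variable {T : ℝ → ℝ} {r a : ℝ}

lemma summable_comp_rpow_of_tendsto (hT : ∀ x, 0 ≤ T x) (ha : 0 < a) (har : 1 < a * r)
    (h : Tendsto (fun x => x ^ r * T x) atTop (nhds 0)) :
    Summable fun n : ℕ => T (((n : ℝ) + 1) ^ a) := by
  have hbound : ∀ᶠ x in atTop, T x ≤ x ^ (-r) := by
    filter_upwards [h.eventually (gt_mem_nhds one_pos), eventually_gt_atTop 0] with x hx hx0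
    rw [rpow_neg hx0.le, ← mul_one (x ^ r)⁻¹, le_inv_mul_iff₀ (rpow_pos_of_pos hx0 r)]
    exact hx.le
  have hgrow : Tendsto (fun n : ℕ => ((n : ℝ) + 1) ^ a) atTop atTop :=
    (tendsto_rpow_atTop ha).comp (tendsto_atTop_add_const_right _ 1 tendsto_natCast_atTop_atTop)
  refine .of_norm_bounded_eventually_nat (g := fun n : ℕ => ((n : ℝ) + 1) ^ (-(a * r))) ?_ ?_
  · exact_mod_cast (summable_nat_add_iff 1).2 (summable_nat_rpow.2 (by linarith))
  · filter_upwards [hgrow.eventually hbound] with n hn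
    rwa [norm_of_nonneg (hT _), neg_mul_eq_mul_neg, rpow_mul (by positivity)]

lemma floor_mul_le_sum_comp_rpow (hT : Antitone T) (ha : 0 < a) {x : ℝ} (hx : 0 ≤ x) :
    (⌊x ^ a⁻¹⌋₊ : ℝ) * T x ≤ ∑ n ∈ range ⌊x ^ a⁻¹⌋₊, T (((n : ℝ) + 1) ^ a) := by
  have hle : ∀ n ∈ range ⌊x ^ a⁻¹⌋₊, T x ≤ T (((n : ℝ) + 1) ^ a) := fun n hn => hT <| by
    refine (le_rpow_inv_iff_of_pos (by positivity) hx ha).1 ?_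
    exact_mod_cast (Nat.le_floor_iff (by positivity)).1 (mem_range.1 hn)
  simpa using card_nsmul_le_sum _ _ _ hle

lemma not_summable_comp_rpow_of_not_tendsto (hT : Antitone T) (hT0 : ∀ x, 0 ≤ T x)
    (hr : 0 ≤ r) (ha : 0 < a) (har : a * r < 1)
    (h : ¬Tendsto (fun x => x ^ r * T x) atTop (nhds 0)) :
    ¬Summable fun n : ℕ => T (((n : ℝ) + 1) ^ a) := by
  intro hsum
  obtain ⟨ε, hε, hfreq⟩ : ∃ ε > 0, ∃ᶠ x in atTop, ε ≤ x ^ r * T x := by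
    by_contra! hsmall
    refine h (tendsto_order.2 ⟨fun b hb => ?_, hsmall⟩)
    filter_upwards [eventually_ge_atTop 0] with x hx
    exact hb.trans_le (mul_nonneg (rpow_nonneg hx r) (hT0 x))
  have hexp : 0 < a⁻¹ - r := by
    rw [sub_pos, ← mul_one a⁻¹, lt_inv_mul_iff₀ ha]
    exact har
  have hgrow : Tendsto (fun x : ℝ => ε * x ^ (a⁻¹ - r) + -ε) atTop atTop :=
    tendsto_atTop_add_const_right _ _ ((tendsto_rpow_atTop hexp).const_mul_atTop hε)
  obtain ⟨x, hεx, hbig, hx1⟩ := (hfreq.and_eventually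
    ((hgrow.eventually_gt_atTop (∑' n : ℕ, T (((n : ℝ) + 1) ^ a))).and
      (eventually_ge_atTop 1))).exists
  have hx0 : 0 < x := one_pos.trans_le hx1
  have hfloor := (Nat.sub_one_lt_floor (x ^ a⁻¹)).le
  have hy : 1 ≤ x ^ a⁻¹ := one_le_rpow hx1 (inv_nonneg.2 ha.le)
  have hz : x ^ (-r) ≤ 1 := rpow_le_one_of_one_le_of_nonpos hx1 (neg_nonpos.2 hr)
  have hεT : ε * x ^ (-r) ≤ T x := by
    rw [rpow_neg hx0.le, ← div_eq_mul_inv, div_le_iff₀ (rpow_pos_of_pos hx0 r), mul_comm]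
    exact hεx
  have hsplit : x ^ (a⁻¹ - r) = x ^ a⁻¹ * x ^ (-r) := by
    rw [sub_eq_add_neg, rpow_add hx0]
  have hmT : ε * x ^ (a⁻¹ - r) + -ε ≤ ⌊x ^ a⁻¹⌋₊ * T x := by
    rw [hsplit]
    nlinarith [mul_le_mul_of_nonneg_right hfloor (hT0 x),
      mul_le_mul_of_nonneg_left hεT (sub_nonneg.2 hy)]
  linarith [floor_mul_le_sum_comp_rpow hT ha hx0.le,
    hsum.sum_le_tsum (range ⌊x ^ a⁻¹⌋₊) fun n _ => hT0 _]

end Tail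

section BorelCantelli

variable {Ω : Type*} [MeasurableSpace Ω] {μ : Measure Ω} {X : ℕ → Ω → ℝ} {c : ℕ → ℝ}

lemma ae_eventually_le_of_summable [IsFiniteMeasure μ]
    (hident : ∀ n, IdentDistrib (X n) (X 0) μ μ)
    (hsum : Summable fun n => (μ {ω | X 0 ω > c n}).toReal) :
    ∀ᵐ ω ∂μ, ∀ᶠ n in atTop, X n ω ≤ c n := by
  have hfin : ∑' n, μ {ω | X n ω > c n} ≠ ∞ := by
    refine ne_of_eq_of_ne (tsum_congr fun n => ?_) hsum.tsum_ofReal_ne_top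
    rw [ENNReal.ofReal_toReal (measure_ne_top μ _)]
    exact (hident n).measure_mem_eq measurableSet_Ioi
  filter_upwards [ae_eventually_notMem hfin] with ω hω
  simpa using hω

lemma ae_frequently_gt_of_not_summable [IsProbabilityMeasure μ]
    (hmeas : ∀ n, Measurable (X n)) (hindep : iIndepFun X μ)
    (hident : ∀ n, IdentDistrib (X n) (X 0) μ μ)
    (hsum : ¬Summable fun n => (μ {ω | X 0 ω > c n}).toReal) :
    ∀ᵐ ω ∂μ, ∃ᶠ n in atTop, c n < X n ω := by
  set B : ℕ → Set Ω := fun n => X n ⁻¹' Set.Ioi (c n)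
  have hB : ∀ n, MeasurableSet (B n) := fun n => hmeas n measurableSet_Ioi
  have hindepB : iIndepSet B μ := (iIndepSet_iff_meas_biInter hB).2 fun s =>
    hindep.measure_inter_preimage_eq_mul s fun _ _ => measurableSet_Ioi
  have hdiv : ∑' n, μ (B n) = ∞ := by
    by_contra hfin
    refine hsum ((ENNReal.summable_toReal hfin).congr fun n => ?_)
    rw [(hident n).measure_mem_eq measurableSet_Ioi]
    rfl
  have hlimsup : ∀ᵐ ω ∂μ, ω ∈ limsup B atTop :=
    (ae_iff_measure_eq (p := (· ∈ limsup B atTop))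
      (MeasurableSet.measurableSet_limsup hB).nullMeasurableSet).2 <| by
        rw [measure_univ]
        exact measure_limsup_eq_one hB hindepB hdiv
  filter_upwards [hlimsup] with ω hω
  exact mem_limsup_iff_frequently_mem.1 hω

end BorelCantelli

section LimsupBounds

variable {Ω : Type*} [MeasurableSpace Ω] {μ : Measure Ω} {X : ℕ → Ω → ℝ} {r a : ℝ}

lemma ae_limsupLogMax_le [IsFiniteMeasure μ] (hident : ∀ n, IdentDistrib (X n) (X 0) μ μ)
    (hr : 0 ≤ r) (har : 1 < a * r)
    (h : Tendsto (fun x : ℝ => x ^ r * (μ {ω | X 0 ω > x}).toReal) atTop (nhds 0)) :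
    ∀ᵐ ω ∂μ, limsupLogMax X ω ≤ ENNReal.ofReal a := by
  have ha : 0 < a := by
    by_contra! ha
    nlinarith
  have hsum := summable_comp_rpow_of_tendsto (fun _ => ENNReal.toReal_nonneg) ha har h
  filter_upwards [ae_eventually_le_of_summable (c := fun n => ((n : ℝ) + 1) ^ a) hident hsum]
    with ω hω
  exact limsupLogMax_le_of_eventually_pmax_le ha (eventually_pmax_le_rpow ha hω)

lemma ae_ofReal_le_limsupLogMax [IsProbabilityMeasure μ]
    (hmeas : ∀ n, Measurable (X n)) (hindep : iIndepFun X μ)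
    (hident : ∀ n, IdentDistrib (X n) (X 0) μ μ)
    (hr : 0 ≤ r) (ha : 0 < a) (har : a * r < 1)
    (h : ¬Tendsto (fun x : ℝ => x ^ r * (μ {ω | X 0 ω > x}).toReal) atTop (nhds 0)) :
    ∀ᵐ ω ∂μ, ENNReal.ofReal a ≤ limsupLogMax X ω := by
  have hT : Antitone fun x => (μ {ω | X 0 ω > x}).toReal := fun x y hxy =>
    ENNReal.toReal_mono (measure_ne_top μ _) (measure_mono fun ω hω => hxy.trans_lt hω)
  have hsum := not_summable_comp_rpow_of_not_tendsto hT (fun _ => ENNReal.toReal_nonneg) hr ha har h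
  filter_upwards [ae_frequently_gt_of_not_summable (c := fun n => ((n : ℝ) + 1) ^ a)
    hmeas hindep hident hsum] with ω hω
  exact ofReal_le_limsupLogMax hω

end LimsupBounds

lemma ae_eq_of_forall_rat {Ω : Type*} [MeasurableSpace Ω] {μ : Measure Ω} {f : Ω → ℝ≥0∞}
    {c : ℝ≥0∞} (hle : ∀ q : ℚ, c < ENNReal.ofReal q → ∀ᵐ ω ∂μ, f ω ≤ ENNReal.ofReal q)
    (hge : ∀ q : ℚ, ENNReal.ofReal q < c → ∀ᵐ ω ∂μ, ENNReal.ofReal q ≤ f ω) :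
    ∀ᵐ ω ∂μ, f ω = c := by
  have hle' := ae_all_iff.2 fun q => eventually_imp_distrib_left.2 (hle q)
  have hge' := ae_all_iff.2 fun q => eventually_imp_distrib_left.2 (hge q)
  filter_upwards [hle', hge'] with ω hωle hωge
  by_contra hne
  rcases lt_or_gt_of_ne hne with hlt | hlt
  · obtain ⟨q, -, hfq, hqc⟩ := ENNReal.lt_iff_exists_rat_btwn.1 hlt
    exact (hωge q hqc).not_gt hfq
  · obtain ⟨q, -, hcq, hqf⟩ := ENNReal.lt_iff_exists_rat_btwn.1 hlt
    exact (hωle q hcq).not_gt hqf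

theorem stmt5 {Ω : Type*} [MeasurableSpace Ω] (μ : Measure Ω) [IsProbabilityMeasure μ]
    (X : ℕ → Ω → ℝ) (hmeas : ∀ n, Measurable (X n))
    (hindep : iIndepFun X μ)
    (hident : ∀ n, IdentDistrib (X n) (X 0) μ μ)
    (ρ₁ : ℝ≥0∞)
    (hρ₁ : ρ₁ = sSup (ENNReal.ofReal '' {r : ℝ | 0 ≤ r ∧
        Tendsto (fun x : ℝ => x ^ r * (μ {ω | X 0 ω > x}).toReal) atTop (nhds 0)})) :
    ∀ᵐ ω ∂μ,
      Filter.limsup (fun n : ℕ => ENNReal.ofReal (Log (pmax X n ω) / Log n)) atTop = ρ₁⁻¹ := by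
  refine ae_eq_of_forall_rat (f := limsupLogMax X) (fun q hq => ?_) (fun q hq => ?_)
  · have hq0 : 0 < (q : ℝ) := ENNReal.ofReal_pos.1 (pos_of_gt hq)
    have hρq : ENNReal.ofReal (q : ℝ)⁻¹ < ρ₁ := by
      rw [ENNReal.ofReal_inv_of_pos hq0]
      exact ENNReal.inv_lt_iff_inv_lt.1 hq
    rw [hρ₁] at hρq
    obtain ⟨_, ⟨r, ⟨hr, htail⟩, rfl⟩, hqr⟩ := lt_sSup_iff.1 hρq
    have hqr' := (ENNReal.ofReal_lt_ofReal_iff_of_nonneg (inv_nonneg.2 hq0.le)).1 hqr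
    exact ae_limsupLogMax_le hident hr ((inv_lt_iff_one_lt_mul₀' hq0).1 hqr') htail
  · rcases le_or_gt (q : ℝ) 0 with hq0 | hq0
    · exact ae_of_all _ fun ω => by simp [ENNReal.ofReal_eq_zero.2 hq0]
    have hρq : ρ₁ < ENNReal.ofReal (q : ℝ)⁻¹ := by
      rw [ENNReal.ofReal_inv_of_pos hq0]
      exact ENNReal.lt_inv_iff_lt_inv.1 hq
    obtain ⟨u, hu, hρu, huq⟩ := ENNReal.lt_iff_exists_real_btwn.1 hρq
    have hnot : ¬Tendsto (fun x : ℝ => x ^ u * (μ {ω | X 0 ω > x}).toReal) atTop (nhds 0) :=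
      fun htail => hρu.not_ge (hρ₁ ▸ le_sSup ⟨u, ⟨hu, htail⟩, rfl⟩)
    have huq' := (ENNReal.ofReal_lt_ofReal_iff (inv_pos.2 hq0)).1 huq
    exact ae_ofReal_le_limsupLogMax hmeas hindep hident hu hq0
      ((lt_inv_mul_iff₀ hq0).1 (by rwa [mul_one])) hnot
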